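/- Let n ∈ ℕ*, let 0 < μ_2 < … < μ_n and z_1,…,z_n ∈ ℝ. If z_1 ≥ 0, z_1 + … + z_n ≥ 0, and one of the following conditions holds: (i) z_2,…,z_n ≥ 0; (ii) z_2,…,z_n ≤ 0; (iii) there exists j ∈ {2,…,n} such that z_1 ≥ −Σ_{i=2, i≠j}^{n} (1 − μ_i/μ_j) z_i e^{−μ_i s} for all s ∈ ℝ_+; then the function φ(s) = z_1 + z_2 e^{−μ_2 s} + … + z_n e^{−μ_n s} is non-negative on ℝ_+. -/

import Mathlib

/-!
Cases (i) and (ii) are immediate: in (i) every term of `φ` is non-negative, and in (ii) every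
term `zᵢ e^{-μᵢ s}` is at least `zᵢ`, so `φ(s) ≥ φ(0) = z₁ + ⋯ + zₙ`. In case (iii), the
derivative of `e^{μⱼ s} φ(s)` is `μⱼ e^{μⱼ s} (z₁ + ∑ᵢ (1 - μᵢ/μⱼ) zᵢ e^{-μᵢ s})`, where the
`j`-th term vanishes; the hypothesis makes it non-negative, so `e^{μⱼ s} φ(s) ≥ φ(0) ≥ 0`.
-/

open Real Finset

section ExpSum

variable {ι : Type*} (a : ℝ) (s : Finset ι) (c μ : ι → ℝ)

noncomputable def expSum (t : ℝ) : ℝ := a + ∑ i ∈ s, c i * exp (-μ i * t)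

theorem expSum_zero : expSum a s c μ 0 = a + ∑ i ∈ s, c i := by
  simp [expSum]

variable {a s c μ}

theorem expSum_nonneg_of_coeff_nonneg (ha : 0 ≤ a) (hc : ∀ i ∈ s, 0 ≤ c i) (t : ℝ) :
    0 ≤ expSum a s c μ t :=
  add_nonneg ha <| sum_nonneg fun i hi => mul_nonneg (hc i hi) (exp_pos _).le

theorem expSum_zero_le_of_coeff_nonpos (hμ : ∀ i ∈ s, 0 ≤ μ i) (hc : ∀ i ∈ s, c i ≤ 0)
    {t : ℝ} (ht : 0 ≤ t) : expSum a s c μ 0 ≤ expSum a s c μ t := by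
  rw [expSum_zero, expSum]
  gcongr with i hi
  have hexp : exp (-μ i * t) ≤ 1 := exp_le_one_iff.2 (by nlinarith [hμ i hi])
  nlinarith [hc i hi]

theorem hasDerivAt_expSum (t : ℝ) :
    HasDerivAt (expSum a s c μ) (∑ i ∈ s, c i * (exp (-μ i * t) * -μ i)) t := by
  refine (HasDerivAt.fun_sum fun i _ => ?_).const_add a
  simpa using (((hasDerivAt_id t).const_mul (-μ i)).exp).const_mul (c i)

theorem hasDerivAt_exp_mul_expSum {m : ℝ} (hm : m ≠ 0) (t : ℝ) :
    HasDerivAt (fun t => exp (m * t) * expSum a s c μ t)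
      (m * exp (m * t) * (a + ∑ i ∈ s, (1 - μ i / m) * (c i * exp (-μ i * t)))) t := by
  have hexp : HasDerivAt (fun t => exp (m * t)) (exp (m * t) * m) t := by
    simpa using ((hasDerivAt_id t).const_mul m).exp
  refine (hexp.mul (hasDerivAt_expSum t)).congr_deriv ?_
  simp only [expSum, mul_add, mul_sum]
  rw [add_assoc, ← sum_add_distrib]
  congr 1
  · ring
  · refine sum_congr rfl fun i _ => ?_
    field_simp
    ring

theorem expSum_zero_le_exp_mul_expSum {m : ℝ} (hm : 0 < m)
    (hweight : ∀ t, 0 ≤ t → 0 ≤ a + ∑ i ∈ s, (1 - μ i / m) * (c i * exp (-μ i * t)))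
    {t : ℝ} (ht : 0 ≤ t) : expSum a s c μ 0 ≤ exp (m * t) * expSum a s c μ t := by
  have hderiv := hasDerivAt_exp_mul_expSum (a := a) (s := s) (c := c) (μ := μ) hm.ne'
  have hdiff : Differentiable ℝ fun t => exp (m * t) * expSum a s c μ t :=
    fun t => (hderiv t).differentiableAt
  have hmono : MonotoneOn (fun t => exp (m * t) * expSum a s c μ t) (Set.Ici 0) := by
    refine monotoneOn_of_deriv_nonneg (convex_Ici 0) hdiff.continuous.continuousOn
      hdiff.differentiableOn fun x hx => ?_
    rw [interior_Ici] at hx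
    rw [(hderiv x).deriv]
    exact mul_nonneg (by positivity) (hweight x (le_of_lt hx))
  simpa using hmono Set.self_mem_Ici (Set.mem_Ici.2 ht) ht

end ExpSum

theorem sum_Icc_one_eq_add_sum_Icc_two {M : Type*} [AddCommMonoid M] (f : ℕ → M) {n : ℕ}
    (hn : 1 ≤ n) : ∑ i ∈ Icc 1 n, f i = f 1 + ∑ i ∈ Icc 2 n, f i := by
  rw [← add_sum_Ioc_eq_sum_Icc hn]
  rfl

theorem nonneg_exp_sum_sufficient_general
    (n : ℕ) (hn : 1 ≤ n) (μ z : ℕ → ℝ)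
    (hμpos : ∀ i, 2 ≤ i → i ≤ n → 0 < μ i)
    (hz1 : 0 ≤ z 1)
    (hsum : 0 ≤ ∑ i ∈ Finset.Icc 1 n, z i)
    (hcase :
      (∀ i, 2 ≤ i → i ≤ n → 0 ≤ z i) ∨
      (∀ i, 2 ≤ i → i ≤ n → z i ≤ 0) ∨
      (∃ j, 2 ≤ j ∧ j ≤ n ∧ ∀ s : ℝ, 0 ≤ s →
        -(∑ i ∈ (Finset.Icc 2 n).erase j,
            (1 - μ i / μ j) * (z i * Real.exp (-μ i * s))) ≤ z 1)) :
    ∀ s : ℝ, 0 ≤ s →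
      0 ≤ z 1 + ∑ i ∈ Finset.Icc 2 n, z i * Real.exp (-μ i * s) := by
  intro s hs
  change 0 ≤ expSum (z 1) (Icc 2 n) z μ s
  have hφ0 : expSum (z 1) (Icc 2 n) z μ 0 = ∑ i ∈ Icc 1 n, z i := by
    rw [expSum_zero, sum_Icc_one_eq_add_sum_Icc_two z hn]
  rcases hcase with hpos | hneg | ⟨j, hj2, hjn, hj⟩
  · exact expSum_nonneg_of_coeff_nonneg hz1 (fun i hi => hpos i (mem_Icc.1 hi).1 (mem_Icc.1 hi).2) s
  · refine hsum.trans (hφ0 ▸ expSum_zero_le_of_coeff_nonpos (fun i hi => ?_) (fun i hi => ?_) hs)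
    · exact (hμpos i (mem_Icc.1 hi).1 (mem_Icc.1 hi).2).le
    · exact hneg i (mem_Icc.1 hi).1 (mem_Icc.1 hi).2
  · have hμj := hμpos j hj2 hjn
    have hweight : ∀ t, 0 ≤ t →
        0 ≤ z 1 + ∑ i ∈ Icc 2 n, (1 - μ i / μ j) * (z i * exp (-μ i * t)) := by
      intro t ht
      rw [← sum_erase _ (by rw [div_self hμj.ne', sub_self, zero_mul])]
      linarith [hj t ht]
    exact nonneg_of_mul_nonneg_right
      (hsum.trans (hφ0 ▸ expSum_zero_le_exp_mul_expSum hμj hweight hs)) (exp_pos _)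

/-- Sufficient conditions for non-negativity on `ℝ₊` of the exponential sum
`φ(s) = z₁ + z₂ e^{-μ₂ s} + ⋯ + zₙ e^{-μₙ s}` with `0 < μ₂ < ⋯ < μₙ`. -/
theorem nonneg_exp_sum_sufficient
    (n : ℕ) (hn : 1 ≤ n) (μ z : ℕ → ℝ)
    (hμpos : ∀ i, 2 ≤ i → i ≤ n → 0 < μ i)
    (hμmono : ∀ i j, 2 ≤ i → i < j → j ≤ n → μ i < μ j)
    (hz1 : 0 ≤ z 1)
    (hsum : 0 ≤ ∑ i ∈ Finset.Icc 1 n, z i)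
    (hcase :
      (∀ i, 2 ≤ i → i ≤ n → 0 ≤ z i) ∨
      (∀ i, 2 ≤ i → i ≤ n → z i ≤ 0) ∨
      (∃ j, 2 ≤ j ∧ j ≤ n ∧ ∀ s : ℝ, 0 ≤ s →
        -(∑ i ∈ (Finset.Icc 2 n).erase j,
            (1 - μ i / μ j) * (z i * Real.exp (-μ i * s))) ≤ z 1)) :
    ∀ s : ℝ, 0 ≤ s →
      0 ≤ z 1 + ∑ i ∈ Finset.Icc 2 n, z i * Real.exp (-μ i * s) :=
  nonneg_exp_sum_sufficient_general n hn μ z hμpos hz1 hsum hcase
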